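/- Let X be a Banach space, Y a closed subspace which is an M-summand in X (so X = Y ⊕_∞ W for some closed subspace W), and Z a closed subspace of Y. For any nonempty closed bounded B ⊆ X write B(1) = {y ∈ Y : ∃ w ∈ W, y + w ∈ B} and B(2) = {w ∈ W : ∃ y ∈ Y, y + w ∈ B}. Then rad_Z(B) = max{rad_Z(B(1)), sup_{w∈B(2)} ‖w‖}. -/

import Mathlib

open Metric Set Bornology Pointwise

/-- The farthest distance `r(v,B) = sup_{b ∈ B} ‖v - b‖`. -/
noncomputable def farr {X : Type*} [NormedAddCommGroup X] (v : X) (B : Set X) : ℝ :=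
  ⨆ b : B, ‖v - (b : X)‖

/-- The restricted Chebyshev radius `rad_V(B) = inf_{v ∈ V} r(v,B)`. -/
noncomputable def rad {X : Type*} [NormedAddCommGroup X] (V B : Set X) : ℝ :=
  ⨅ v : V, farr (v : X) B

/-- The set of restricted Chebyshev centers of `B` in `V`. -/
noncomputable def cheb {X : Type*} [NormedAddCommGroup X] (V B : Set X) : Set X :=
  {v ∈ V | farr v B = rad V B}

/-!
Writing `b = y + w` with `y ∈ Y`, `w ∈ W`, the M-summand norm gives, for every `z ∈ Y`,
`‖z - b‖ = max ‖z - y‖ ‖w‖`. Taking suprema over `B` yields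
`r(z, B) = max (r(z, B(1))) (sup_{w ∈ B(2)} ‖w‖)` for all `z ∈ Z`, and the infimum over `z` commutes
with the continuous monotone map `t ↦ max t c`.
-/

section FarthestDistance

variable {X : Type*} [NormedAddCommGroup X]

lemma farr_nonneg (v : X) (B : Set X) : 0 ≤ farr v B :=
  Real.iSup_nonneg fun _ => norm_nonneg _

lemma farr_le {v : X} {B : Set X} {r : ℝ} (hr : 0 ≤ r) (h : ∀ b ∈ B, ‖v - b‖ ≤ r) :
    farr v B ≤ r :=
  Real.iSup_le (fun b => h b b.2) hr

lemma norm_sub_le_farr {B : Set X} (hB : IsBounded B) (v : X) {b : X} (hb : b ∈ B) :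
    ‖v - b‖ ≤ farr v B := by
  obtain ⟨r, hr⟩ := hB.subset_closedBall v
  refine le_ciSup (f := fun b : B => ‖v - (b : X)‖) ⟨r, ?_⟩ ⟨b, hb⟩
  rintro _ ⟨b', rfl⟩
  simpa [dist_eq_norm'] using hr b'.2

lemma rad_eq_max_of_farr_eq_max {V B B' : Set X} (hV : V.Nonempty) {c : ℝ}
    (h : ∀ v ∈ V, farr v B = max (farr v B') c) : rad V B = max (rad V B') c := by
  have : Nonempty V := hV.to_subtype
  unfold rad
  rw [iInf_congr fun v : V => h v v.2]
  refine ((monotone_id.max monotone_const).map_ciInf_of_continuousAt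
    (continuous_id.max continuous_const).continuousAt ⟨0, ?_⟩).symm
  rintro _ ⟨v, rfl⟩
  exact farr_nonneg _ _

end FarthestDistance

section MSummand

variable {X : Type*} [NormedAddCommGroup X] {Y W : AddSubgroup X}

lemma norm_sub_add_eq_max (hnorm : ∀ y ∈ Y, ∀ w ∈ W, ‖y + w‖ = max ‖y‖ ‖w‖)
    {z y w : X} (hz : z ∈ Y) (hy : y ∈ Y) (hw : w ∈ W) :
    ‖z - (y + w)‖ = max ‖z - y‖ ‖w‖ := by
  rw [show z - (y + w) = (z - y) + -w by abel, hnorm _ (Y.sub_mem hz hy) _ (W.neg_mem hw),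
    norm_neg]

lemma isBounded_summand_fst (hnorm : ∀ y ∈ Y, ∀ w ∈ W, ‖y + w‖ = max ‖y‖ ‖w‖)
    {B : Set X} (hB : IsBounded B) : IsBounded {y | y ∈ Y ∧ ∃ w ∈ W, y + w ∈ B} := by
  obtain ⟨M, hM⟩ := isBounded_iff_forall_norm_le.mp hB
  refine isBounded_iff_forall_norm_le.mpr ⟨M, ?_⟩
  rintro y ⟨hy, w, hw, hb⟩
  exact (le_max_left _ _).trans ((hnorm y hy w hw).symm.trans_le (hM _ hb))

lemma bddAbove_norm_summand_snd (hnorm : ∀ y ∈ Y, ∀ w ∈ W, ‖y + w‖ = max ‖y‖ ‖w‖)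
    {B : Set X} (hB : IsBounded B) :
    BddAbove (range fun w : {w | w ∈ W ∧ ∃ y ∈ Y, y + w ∈ B} => ‖(w : X)‖) := by
  obtain ⟨M, hM⟩ := isBounded_iff_forall_norm_le.mp hB
  refine ⟨M, ?_⟩
  rintro _ ⟨⟨w, hw, y, hy, hb⟩, rfl⟩
  exact (le_max_right _ _).trans ((hnorm y hy w hw).symm.trans_le (hM _ hb))

lemma farr_eq_max_of_mem (hsum : ∀ x : X, ∃ y ∈ Y, ∃ w ∈ W, x = y + w)
    (hnorm : ∀ y ∈ Y, ∀ w ∈ W, ‖y + w‖ = max ‖y‖ ‖w‖)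
    {B : Set X} (hB : IsBounded B) {z : X} (hz : z ∈ Y) :
    farr z B = max (farr z {y | y ∈ Y ∧ ∃ w ∈ W, y + w ∈ B})
      (⨆ w : {w | w ∈ W ∧ ∃ y ∈ Y, y + w ∈ B}, ‖(w : X)‖) := by
  apply le_antisymm
  · refine farr_le (le_max_of_le_left (farr_nonneg _ _)) fun b hb => ?_
    obtain ⟨y, hy, w, hw, rfl⟩ := hsum b
    rw [norm_sub_add_eq_max hnorm hz hy hw]
    exact max_le_max (norm_sub_le_farr (isBounded_summand_fst hnorm hB) z ⟨hy, w, hw, hb⟩)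
      (le_ciSup (bddAbove_norm_summand_snd hnorm hB) ⟨w, hw, y, hy, hb⟩)
  · refine max_le (farr_le (farr_nonneg _ _) ?_) (Real.iSup_le ?_ (farr_nonneg _ _))
    · rintro y ⟨hy, w, hw, hb⟩
      calc ‖z - y‖ ≤ ‖z - (y + w)‖ := by
            rw [norm_sub_add_eq_max hnorm hz hy hw]; exact le_max_left _ _
        _ ≤ farr z B := norm_sub_le_farr hB z hb
    · rintro ⟨w, hw, y, hy, hb⟩
      calc ‖w‖ ≤ ‖z - (y + w)‖ := by
            rw [norm_sub_add_eq_max hnorm hz hy hw]; exact le_max_right _ _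
        _ ≤ farr z B := norm_sub_le_farr hB z hb

end MSummand

theorem stmt13_general {X : Type*} [NormedAddCommGroup X] [NormedSpace ℝ X]
    (Y W Z : Subspace ℝ X)
    (hsum : ∀ x : X, ∃ y ∈ Y, ∃ w ∈ W, x = y + w)
    (hnorm : ∀ y ∈ Y, ∀ w ∈ W, ‖y + w‖ = max ‖y‖ ‖w‖)
    (hZY : Z ≤ Y)
    (B : Set X) (hBb : IsBounded B) :
    rad (Z : Set X) B =
      max (rad (Z : Set X) {y | y ∈ Y ∧ ∃ w ∈ W, y + w ∈ B})
        (⨆ w : {w | w ∈ W ∧ ∃ y ∈ Y, y + w ∈ B}, ‖(w : X)‖) :=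
  rad_eq_max_of_farr_eq_max ⟨0, Z.zero_mem⟩ fun _ hz =>
    farr_eq_max_of_mem (Y := Y.toAddSubgroup) (W := W.toAddSubgroup) hsum hnorm hBb (hZY hz)

theorem stmt13 {X : Type*} [NormedAddCommGroup X] [NormedSpace ℝ X] [CompleteSpace X]
    (Y W Z : Subspace ℝ X)
    (hYc : IsClosed (Y : Set X)) (hWc : IsClosed (W : Set X))
    (hsum : ∀ x : X, ∃ y ∈ Y, ∃ w ∈ W, x = y + w)
    (hnorm : ∀ y ∈ Y, ∀ w ∈ W, ‖y + w‖ = max ‖y‖ ‖w‖)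
    (hZY : Z ≤ Y) (hZc : IsClosed (Z : Set X))
    (B : Set X) (hBne : B.Nonempty) (hBc : IsClosed B) (hBb : IsBounded B) :
    rad (Z : Set X) B =
      max (rad (Z : Set X) {y | y ∈ Y ∧ ∃ w ∈ W, y + w ∈ B})
        (⨆ w : {w | w ∈ W ∧ ∃ y ∈ Y, y + w ∈ B}, ‖(w : X)‖) :=
  stmt13_general Y W Z hsum hnorm hZY B hBb
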